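/- For all constants C ≥ 1 and A, γ, σ > 0 there exists a constant L_* = L_*(C,A,γ,σ) > 0 such that for every drift b ∈ Σ(C,A,γ,σ) and every x ∈ [−A,A] one has q_b(x) ≥ L_*. -/
import Mathlib

open MeasureTheory

/-- The paper's class `Lip_loc(ℝ)` of locally Lipschitz functions. -/
def LipLoc (f : ℝ → ℝ) : Prop :=
  ∀ n : ℕ, ∃ L : ℝ, ∀ x y : ℝ, |x| ≤ n → |y| ≤ n → |f x - f y| ≤ L * |x - y|

/-- The drift class `Σ(C, A, γ, σ)`. -/
def driftClass (C A γ σ : ℝ) : Set (ℝ → ℝ) :=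
  {b | LipLoc b ∧ (∀ x : ℝ, |b x| ≤ C * (1 + |x|)) ∧
    ∀ x : ℝ, A ≤ |x| → b x * Real.sign x / σ ^ 2 ≤ -γ}

/-- The normalizing constant `C_{b,σ} = ∫_ℝ exp(∫₀ˣ 2 b(u)/σ² du) dx`. -/
noncomputable def normConst (b : ℝ → ℝ) (σ : ℝ) : ℝ :=
  ∫ x : ℝ, Real.exp (∫ u in (0:ℝ)..x, 2 * b u / σ ^ 2)

/-- The invariant density `q_b(x) = C_{b,σ}⁻¹ exp(∫₀ˣ 2 b(u)/σ² du)`. -/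
noncomputable def invDensity (b : ℝ → ℝ) (σ : ℝ) (x : ℝ) : ℝ :=
  (normConst b σ)⁻¹ * Real.exp (∫ u in (0:ℝ)..x, 2 * b u / σ ^ 2)

lemma my_integrable_exp_neg_mul_abs {c : ℝ} (hc : 0 < c) :
    Integrable fun x : ℝ => Real.exp (-c * |x|) := by
  have h1 : IntegrableOn (fun x : ℝ => Real.exp (-c * |x|)) (Set.Ioi (0:ℝ)) := by
    apply (exp_neg_integrableOn_Ioi 0 hc).congr_fun ?_ measurableSet_Ioi
    intro x hx
    simp [abs_of_pos (Set.mem_Ioi.mp hx)]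
  rw [← integrableOn_univ, ← @Set.Iio_union_Ici _ _ (0 : ℝ), integrableOn_union,
    integrableOn_Ici_iff_integrableOn_Ioi]
  refine ⟨?_, h1⟩
  rw [← (Measure.measurePreserving_neg (volume : Measure ℝ)).integrableOn_comp_preimage
      (Homeomorph.neg ℝ).measurableEmbedding]
  simpa [Function.comp_def, abs_neg] using h1

lemma LipLoc_continuous {f : ℝ → ℝ} (hf : LipLoc f) : Continuous f := by
  rw [continuous_iff_continuousAt]
  intro x
  obtain ⟨n, hn⟩ := exists_nat_gt (|x| + 1)
  obtain ⟨L, hL⟩ := hf n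
  rw [Metric.continuousAt_iff]
  intro ε hε
  refine ⟨min 1 (ε / (|L| + 1)), by positivity, fun {y} hy => ?_⟩
  have hd : dist y x < min 1 (ε / (|L| + 1)) := hy
  rw [Real.dist_eq] at hd ⊢
  have h1 : |y - x| < 1 := lt_of_lt_of_le hd (min_le_left _ _)
  have h2 : |y - x| < ε / (|L| + 1) := lt_of_lt_of_le hd (min_le_right _ _)
  have hyn : |y| ≤ n := by
    have := abs_sub_abs_le_abs_sub y x
    linarith
  have hxn : |x| ≤ n := by linarith
  have h0 := hL y x hyn hxn
  have h3 : L * |y - x| ≤ |L| * |y - x| :=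
    mul_le_mul_of_nonneg_right (le_abs_self L) (abs_nonneg _)
  have h4 : |L| * |y - x| < ε := by
    calc |L| * |y - x| ≤ (|L| + 1) * |y - x| := by nlinarith [abs_nonneg (y - x)]
    _ < (|L| + 1) * (ε / (|L| + 1)) := mul_lt_mul_of_pos_left h2 (by positivity)
    _ = ε := by field_simp
  linarith

/-- The invariant density is bounded below by a positive constant `L_*` on `[-A, A]`,
uniformly over the drift class. -/
theorem stmt1 (C A γ σ : ℝ) (hC : 1 ≤ C) (hA : 0 < A) (hγ : 0 < γ) (hσ : 0 < σ) :
    ∃ Lstar : ℝ, 0 < Lstar ∧ ∀ b ∈ driftClass C A γ σ, ∀ x ∈ Set.Icc (-A) A,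
      Lstar ≤ invDensity b σ x := by
  have hσ2 : (0:ℝ) < σ ^ 2 := by positivity
  have hCpos : (0:ℝ) < C := lt_of_lt_of_le one_pos hC
  set c : ℝ := 2 * C * (1 + A) / σ ^ 2 with hc_def
  have hc : 0 < c := by positivity
  set M : ℝ := c * A with hM_def
  have hM : 0 < M := by positivity
  set B : ℝ → ℝ := fun x => Real.exp (M + 2*γ*A) * Real.exp (-(2*γ) * |x|) with hB_def
  have hBpos : ∀ y, 0 < B y := fun y => by rw [hB_def]; positivity
  have hBint : Integrable B := (my_integrable_exp_neg_mul_abs (by positivity)).const_mul _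
  set K : ℝ := ∫ x : ℝ, B x with hK_def
  have hKpos : 0 < K := by
    rw [hK_def, integral_pos_iff_support_of_nonneg_ae
      (Filter.Eventually.of_forall fun y => (hBpos y).le) hBint]
    have hsupp : Function.support B = Set.univ :=
      Set.eq_univ_of_forall fun y => (hBpos y).ne'
    rw [hsupp]
    simp
  refine ⟨K⁻¹ * Real.exp (-M), by positivity, ?_⟩
  rintro b ⟨hLip, hgrow, hdrift⟩ x hx
  obtain ⟨hx1, hx2⟩ := hx
  set g : ℝ → ℝ := fun u => 2 * b u / σ ^ 2 with hg_def
  have hb_cont : Continuous b := LipLoc_continuous hLip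
  have hg_cont : Continuous g := by rw [hg_def]; fun_prop
  have hgint : ∀ a b' : ℝ, IntervalIntegrable g volume a b' :=
    fun a b' => hg_cont.intervalIntegrable a b'
  set F : ℝ → ℝ := fun y => ∫ u in (0:ℝ)..y, g u with hF_def
  have hF_cont : Continuous F := intervalIntegral.continuous_primitive hgint 0
  -- bound on [-A, A]
  have hF_bdd : ∀ y, -A ≤ y → y ≤ A → |F y| ≤ M := by
    intro y hy1 hy2
    have h : ‖∫ u in (0:ℝ)..y, g u‖ ≤ c * |y - 0| := by
      apply intervalIntegral.norm_integral_le_of_norm_le_const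
      intro u hu
      have huA : |u| ≤ A := by
        rcases Set.mem_uIoc.mp hu with ⟨hA1, hA2⟩ | ⟨hA1, hA2⟩ <;>
          (rw [abs_le]; constructor <;> linarith)
      have hgu_eq : ‖g u‖ = 2 * |b u| / σ ^ 2 := by
        rw [hg_def, Real.norm_eq_abs, abs_div, abs_of_pos hσ2, abs_mul]
        norm_num
      rw [hgu_eq, hc_def]
      have h2 : 2 * |b u| ≤ 2 * C * (1 + A) := by
        have := hgrow u
        nlinarith [abs_nonneg u, abs_nonneg (b u)]
      gcongr
    rw [Real.norm_eq_abs, sub_zero] at h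
    have hFy : F y = ∫ u in (0:ℝ)..y, g u := by rw [hF_def]
    rw [hFy]
    calc |∫ u in (0:ℝ)..y, g u| ≤ c * |y| := h
      _ ≤ c * A := mul_le_mul_of_nonneg_left (abs_le.mpr ⟨hy1, hy2⟩) hc.le
      _ = M := hM_def.symm
  have hF_A : F A ≤ M := (abs_le.mp (hF_bdd A (by linarith) le_rfl)).2
  have hF_nA : F (-A) ≤ M := (abs_le.mp (hF_bdd (-A) le_rfl (by linarith))).2
  -- tail bound
  have hF_tail : ∀ y : ℝ, F y ≤ M + 2*γ*A - 2*γ*|y| := by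
    intro y
    rcases le_or_gt (|y|) A with h | h
    · have h' := (abs_le.mp (hF_bdd y (abs_le.mp h).1 (abs_le.mp h).2)).2
      nlinarith [abs_nonneg y]
    · rcases lt_or_ge y 0 with hy | hy
      · have hyA : y < -A := by rw [abs_of_neg hy] at h; linarith
        have hsplit : F (-A) + ∫ u in (-A)..y, g u = F y :=
          intervalIntegral.integral_add_adjacent_intervals (hgint 0 (-A)) (hgint (-A) y)
        have hmono : (∫ _ in y..(-A), (2*γ : ℝ)) ≤ ∫ u in y..(-A), g u := by
          apply intervalIntegral.integral_mono_on (by linarith)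
            intervalIntegrable_const (hgint y (-A))
          intro u hu
          obtain ⟨hu1, hu2⟩ := hu
          have hu0 : u < 0 := by linarith
          have hdu := hdrift u (by rw [abs_of_neg hu0]; linarith)
          rw [Real.sign_of_neg hu0, mul_neg_one, neg_div] at hdu
          have hbu : γ ≤ b u / σ ^ 2 := by linarith
          have hgu : g u = 2 * (b u / σ ^ 2) := by rw [hg_def]; ring
          rw [hgu]; linarith
        rw [intervalIntegral.integral_const, smul_eq_mul] at hmono
        have hFy : F y = F (-A) - ∫ u in y..(-A), g u := by
          rw [← hsplit, intervalIntegral.integral_symm y (-A)]; ring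
        rw [abs_of_neg hy]
        rw [hFy]
        nlinarith
      · have hyA : A < y := by rw [abs_of_nonneg hy] at h; linarith
        have hsplit : F A + ∫ u in A..y, g u = F y :=
          intervalIntegral.integral_add_adjacent_intervals (hgint 0 A) (hgint A y)
        have hmono : (∫ u in A..y, g u) ≤ ∫ _ in A..y, (-(2*γ) : ℝ) := by
          apply intervalIntegral.integral_mono_on (by linarith) (hgint A y)
            intervalIntegrable_const
          intro u hu
          obtain ⟨hu1, hu2⟩ := hu
          have hu0 : 0 < u := by linarith
          have hdu := hdrift u (by rw [abs_of_pos hu0]; exact hu1)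
          rw [Real.sign_of_pos hu0, mul_one] at hdu
          have hgu : g u = 2 * (b u / σ ^ 2) := by rw [hg_def]; ring
          rw [hgu]; linarith
        rw [intervalIntegral.integral_const, smul_eq_mul] at hmono
        rw [abs_of_nonneg hy]
        nlinarith [hsplit]
  -- exp bound and integrability
  have hexp_bd : ∀ y : ℝ, Real.exp (F y) ≤ B y := by
    intro y
    show Real.exp (F y) ≤ Real.exp (M + 2*γ*A) * Real.exp (-(2*γ) * |y|)
    rw [← Real.exp_add]
    apply Real.exp_le_exp.mpr
    have := hF_tail y
    linarith
  have hFexp_int : Integrable (fun y => Real.exp (F y)) := by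
    apply Integrable.mono' hBint ((Real.continuous_exp.comp hF_cont).aestronglyMeasurable)
    filter_upwards with y
    simp only [Function.comp_apply, Real.norm_eq_abs, abs_of_pos (Real.exp_pos (F y))]
    exact hexp_bd y
  have hnc_eq : normConst b σ = ∫ y : ℝ, Real.exp (F y) := by
    simp only [normConst, hF_def, hg_def]
  have hnc_pos : 0 < normConst b σ := by
    rw [hnc_eq, integral_pos_iff_support_of_nonneg_ae
      (Filter.Eventually.of_forall fun y => (Real.exp_pos _).le) hFexp_int]
    have hsupp : Function.support (fun y => Real.exp (F y)) = Set.univ :=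
      Set.eq_univ_of_forall fun y => (Real.exp_pos _).ne'
    rw [hsupp]
    simp
  have hnc_le : normConst b σ ≤ K := by
    rw [hnc_eq, hK_def]
    exact integral_mono hFexp_int hBint hexp_bd
  have hFx : -M ≤ F x := (abs_le.mp (hF_bdd x hx1 hx2)).1
  have h1 : K⁻¹ ≤ (normConst b σ)⁻¹ := by
    apply inv_anti₀ hnc_pos hnc_le
  have h2 : Real.exp (-M) ≤ Real.exp (F x) := Real.exp_le_exp.mpr hFx
  have heq : invDensity b σ x = (normConst b σ)⁻¹ * Real.exp (F x) := by
    simp only [invDensity, hF_def, hg_def]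
  rw [heq]
  exact mul_le_mul h1 h2 (Real.exp_pos _).le (by positivity)
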